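/- For every nonzero term in the Leibniz expansion of the determinant of an n × n periodic tridiagonal matrix (nonzero entries only at positions (i,i), (i,i±1 mod n)), the corresponding permutation is either one of the two full n-cycles k ↦ k±1 (mod n), or a product of disjoint transpositions of adjacent (cyclically consecutive) indices. -/
import Mathlib

private lemma shift_all (n : ℕ) [NeZero n] (σ : Equiv.Perm (ZMod n)) (d : ZMod n)
    (hdd : d * d = 1) (h2 : 2 * d ≠ 0)
    (h : ∀ i : ZMod n, σ i = i ∨ σ i = i + d ∨ σ i = i - d)
    (i : ZMod n) (h0 : σ i = i + d) (h1 : σ (i + d) = i + d + d) :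
    ∀ j, σ j = j + d := by
  have hd0 : d ≠ 0 := by rintro rfl; simp at h2
  have key : ∀ m : ℕ,
      σ (i + (m : ZMod n) * d) = i + (m : ZMod n) * d + d ∧
      σ (i + ((m : ℕ) + 1 : ZMod n) * d) = i + ((m : ℕ) + 1 : ZMod n) * d + d := by
    intro m
    induction m with
    | zero =>
      constructor
      · simpa using h0
      · have : i + ((0 : ℕ) + 1 : ZMod n) * d = i + d := by push_cast; ring
        rw [this]; exact h1
    | succ m ih =>
      constructor
      · have e : ((m + 1 : ℕ) : ZMod n) * d = ((m : ℕ) + 1 : ZMod n) * d := by push_cast; ring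
        rw [e]; exact ih.2
      set j : ZMod n := i + ((m + 1 : ℕ) + 1 : ZMod n) * d with hj
      have hj1 : j - d = i + ((m : ℕ) + 1 : ZMod n) * d := by rw [hj]; push_cast; ring
      have hj2 : j - d - d = i + (m : ZMod n) * d := by rw [hj]; push_cast; ring
      have s1 : σ (j - d) = j := by rw [hj1, ih.2, ← hj1]; ring
      have s2 : σ (j - d - d) = j - d := by rw [hj2, ih.1, ← hj2, hj1]; push_cast; ring
      rcases h j with hc | hc | hc
      · exfalso
        have e := σ.injective (s1.trans hc.symm)
        exact hd0 (by linear_combination -e)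
      · exact hc
      · exfalso
        have e := σ.injective (s2.trans hc.symm)
        exact h2 (by linear_combination -e)
  intro j
  have hm := (key ((j - i) * d).val).1
  have : i + ((((j - i) * d).val : ℕ) : ZMod n) * d = j := by
    rw [ZMod.natCast_val, ZMod.cast_id]
    calc i + (j - i) * d * d = i + (j - i) * (d * d) := by ring
    _ = j := by rw [hdd]; ring
  rwa [this] at hm

/-- for a periodic tridiagonal n × n matrix a (nonzero entries only at
positions (i,i) and (i, i±1) cyclically), every permutation giving a nonzero term in
the Leibniz expansion of det a is either one of the two full cycles k ↦ k ± 1, or an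
involution moving every index to itself or to a cyclically adjacent index (i.e. a
product of disjoint transpositions of cyclically consecutive indices). -/
theorem periodic_tridiagonal_det_permutations (n : ℕ) [NeZero n]
    (a : Matrix (ZMod n) (ZMod n) ℝ)
    (ha : ∀ i j : ZMod n, a i j ≠ 0 → j = i ∨ j = i + 1 ∨ j = i - 1)
    (σ : Equiv.Perm (ZMod n)) (hσ : ∏ i : ZMod n, a i (σ i) ≠ 0) :
    σ = Equiv.addRight (1 : ZMod n) ∨ σ = Equiv.addRight (-1 : ZMod n) ∨
      (σ * σ = 1 ∧ ∀ k : ZMod n, σ k = k ∨ σ k = k + 1 ∨ σ k = k - 1) := by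
  have h : ∀ i : ZMod n, σ i = i ∨ σ i = i + 1 ∨ σ i = i - 1 := fun i =>
    ha i (σ i) (Finset.prod_ne_zero_iff.mp hσ i (Finset.mem_univ i))
  by_cases hinv : σ * σ = 1
  · exact Or.inr (Or.inr ⟨hinv, h⟩)
  have : ∃ k, σ (σ k) ≠ k := by
    by_contra hc
    push_neg at hc
    exact hinv (Equiv.ext fun k => by simpa using hc k)
  obtain ⟨k, hk⟩ := this
  rcases h k with hc | hc | hc
  · exact absurd (by rw [hc, hc]) hk
  · -- σ k = k + 1, show σ = addRight 1
    left
    have hk1 : σ (k + 1) ≠ k := by rwa [hc] at hk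
    have h1 : σ (k + 1) = k + 1 + 1 := by
      rcases h (k + 1) with hc' | hc' | hc'
      · have e : k = k + 1 := σ.injective (hc.trans hc'.symm)
        exact absurd (hc'.trans e.symm) hk1
      · exact hc'
      · exact absurd (by rw [hc']; ring) hk1
    have h2 : (2 : ZMod n) * 1 ≠ 0 := by
      intro e
      exact hk1 (by rw [h1]; linear_combination e)
    have hall := shift_all n σ 1 (by ring) h2 h k hc h1
    exact Equiv.ext fun j => by rw [hall j]; rfl
  · -- σ k = k - 1, show σ = addRight (-1)
    right; left
    have hc' : σ k = k + (-1) := by rw [hc]; ring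
    have hk1 : σ (k + (-1)) ≠ k := by rwa [hc'] at hk
    have h' : ∀ i : ZMod n, σ i = i ∨ σ i = i + (-1) ∨ σ i = i - (-1) := by
      intro i
      rcases h i with hx | hx | hx
      · exact Or.inl hx
      · exact Or.inr (Or.inr (by rw [hx]; ring))
      · exact Or.inr (Or.inl (by rw [hx]; ring))
    have h1 : σ (k + (-1)) = k + (-1) + (-1) := by
      rcases h' (k + (-1)) with hx | hx | hx
      · have e : k = k + (-1) := σ.injective (hc'.trans hx.symm)
        exact absurd (hx.trans e.symm) hk1
      · exact hx
      · exact absurd (by rw [hx]; ring) hk1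
    have h2 : (2 : ZMod n) * (-1) ≠ 0 := by
      intro e
      exact hk1 (by rw [h1]; linear_combination e)
    have hall := shift_all n σ (-1) (by ring) h2 h' k hc' h1
    exact Equiv.ext fun j => by rw [hall j]; rfl
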